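/- Let L_∨ ⊆ {a,b}^ω be the language of infinite words that contain the factor aaaa at infinitely many positions or contain the factor bbbb at infinitely many positions. Let T be a deterministic partial transition system over the alphabet {a,b} with states q_0, q_1, …, q_n where n ≥ 1, such that: for every i < n there is a letter σ_i ∈ {a,b} with δ(q_i, σ_i) = q_i (a self-loop) and δ(q_i, τ_i) = q_{i+1} for the other letter τ_i; and δ(q_n, τ) = q_0 for some letter τ ∈ {a,b}, while on the other letter q_n either has a self-loop or no transition. Then there exist ultimately periodic words w1, w2 ∈ {a,b}^ω whose runs in T starting from q_0 are infinite and have exactly the same infinity set (namely all transitions defined among q_0, …, q_n), such that w2 ∈ L_∨ and w1 ∉ L_∨. Consequently, no Muller condition over the transitions of T (and hence no Büchi, generalized Büchi, parity, or Rabin condition) yields an automaton on T with initial state q_0 that recognizes L_∨. -/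

import Mathlib

/-- The ultimately periodic word `u v^ω` (for `v` nonempty) as a function
`ℕ → α`. -/
def upWord {α : Type*} (u v : List α) (hv : v ≠ []) : ℕ → α :=
  fun n =>
    if h : n < u.length then u.get ⟨n, h⟩
    else v.get ⟨(n - u.length) % v.length, Nat.mod_lt _ (List.length_pos_iff.mpr hv)⟩

/-- The (possibly finite) run of a deterministic partial transition system on
an infinite word. -/
def runP {Q A : Type*} (δ : Q → A → Option Q) (q0 : Q) (w : ℕ → A) :
    ℕ → Option Q
  | 0 => some q0
  | n + 1 => (runP δ q0 w n).bind (fun q => δ q (w n))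

/-- The infinity set of the (partial) run on `w`. -/
def infSetP {Q A : Type*} (δ : Q → A → Option Q) (q0 : Q) (w : ℕ → A) :
    Set (Q × A) :=
  {qc | {k | runP δ q0 w k = some qc.1 ∧ w k = qc.2}.Infinite}

/-- The language `L_∨` over the two-letter alphabet `Bool`: words containing
the factor `aaaa` at infinitely many positions or the factor `bbbb` at
infinitely many positions. -/
def Lvee : Set (ℕ → Bool) :=
  {w | ∃ c : Bool,
    {k | w k = c ∧ w (k + 1) = c ∧ w (k + 2) = c ∧ w (k + 3) = c}.Infinite}

/-!
The chain together with the closing transition forms a cycle through `q₀` reading every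
defined transition exactly once: `σ₀ σ̄₀ σ₁ σ̄₁ ⋯ σₙ₋₁ σ̄ₙ₋₁` followed by the letters read at `qₙ`.
Its letters alternate inside each pair, so `w1`, the repetition of this cycle, never contains
four equal letters in a row. Prefixing each period with four self-loops `σ₀` at `q₀` gives a
word `w2` with the same infinity set which contains `σ₀⁴` infinitely often. A Muller condition
only sees the infinity set, so it cannot accept `w2` and reject `w1`.
-/

section ClosedRun

variable {Q A : Type*} {δ : Q → A → Option Q} {q0 : Q} {s : ℕ → Q} {g : ℕ → A} {P : ℕ}

def IsClosedRun (δ : Q → A → Option Q) (q0 : Q) (s : ℕ → Q) (g : ℕ → A) (P : ℕ) : Prop :=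
  0 < P ∧ s 0 = q0 ∧ ∀ r < P, δ (s r) (g r) = some (s ((r + 1) % P))

theorem IsClosedRun.runP_eq (h : IsClosedRun δ q0 s g P) (k : ℕ) :
    runP δ q0 (fun m => g (m % P)) k = some (s (k % P)) := by
  obtain ⟨hP, hs0, hstep⟩ := h
  induction k with
  | zero => simp [runP, hs0]
  | succ k ih =>
    rw [runP, ih, Option.bind_some, hstep _ (Nat.mod_lt _ hP), Nat.mod_add_mod]

theorem IsClosedRun.runP_ne_none (h : IsClosedRun δ q0 s g P) (k : ℕ) :
    runP δ q0 (fun m => g (m % P)) k ≠ none := by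
  simp [h.runP_eq]

theorem IsClosedRun.infSetP_eq (h : IsClosedRun δ q0 s g P)
    (hcover : ∀ p a, δ p a ≠ none → ∃ r < P, s r = p ∧ g r = a) :
    infSetP δ q0 (fun m => g (m % P)) = {qc | δ qc.1 qc.2 ≠ none} := by
  ext ⟨p, a⟩
  constructor
  · intro hinf
    obtain ⟨k, hkp, rfl⟩ := hinf.nonempty
    obtain rfl : s (k % P) = p := Option.some_inj.mp ((h.runP_eq k).symm.trans hkp)
    simp [h.2.2 _ (Nat.mod_lt _ h.1)]
  · intro hpa
    obtain ⟨r, hr, rfl, rfl⟩ := hcover p a hpa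
    have hmod : ∀ m, (m * P + r) % P = r := fun m => by
      rw [Nat.mul_comm, Nat.mul_add_mod, Nat.mod_eq_of_lt hr]
    refine Set.infinite_of_injective_forall_mem (f := fun m => m * P + r) ?_ fun m => ?_
    · intro a b hab
      exact Nat.eq_of_mul_eq_mul_right h.1 (Nat.add_right_cancel hab)
    · exact ⟨by rw [h.runP_eq, hmod], by simp only [hmod]⟩

def prependConst (m : ℕ) (x : A) (f : ℕ → A) (r : ℕ) : A :=
  if r < m then x else f (r - m)

theorem IsClosedRun.prepend {c : A} (h : IsClosedRun δ q0 s g P) (hc : δ q0 c = some q0)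
    (m : ℕ) :
    IsClosedRun δ q0 (prependConst m q0 s) (prependConst m c g) (m + P) := by
  obtain ⟨hP, hs0, hstep⟩ := h
  refine ⟨by omega, by by_cases hm : 0 < m <;> simp [prependConst, hm, hs0], fun r hr => ?_⟩
  by_cases hrm : r < m
  · rw [Nat.mod_eq_of_lt (by omega)]
    by_cases hrm' : r + 1 < m
    · simp [prependConst, hrm, hrm', hc]
    · simp [prependConst, hrm, hrm', hc, show r + 1 - m = 0 by omega, hs0]
  · simp only [prependConst, hrm, if_false, hstep (r - m) (by omega)]
    by_cases hend : r + 1 = m + P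
    · simp [hend, show r - m + 1 = P by omega, hs0]
    · rw [Nat.mod_eq_of_lt (by omega), Nat.mod_eq_of_lt (by omega)]
      simp [show ¬ r + 1 < m by omega, show r + 1 - m = r - m + 1 by omega]

end ClosedRun

theorem exists_upWord_eq_mod {α : Type*} (g : ℕ → α) {P : ℕ} (hP : 0 < P) :
    ∃ u v : List α, ∃ hv : v ≠ [], (fun k => g (k % P)) = upWord u v hv :=
  ⟨[], List.ofFn fun j : Fin P => g j, by simp [List.ofFn_eq_nil_iff]; omega, by
    funext k; simp [upWord]⟩

theorem not_exists_muller_eq_of_infSetP_eq {Q A : Type*} {δ : Q → A → Option Q} {q0 : Q}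
    {L : Set (ℕ → A)} {w₁ w₂ : ℕ → A} (hw₁ : ∀ k, runP δ q0 w₁ k ≠ none)
    (hinf : infSetP δ q0 w₁ = infSetP δ q0 w₂) (hw₂L : w₂ ∈ L) (hw₁L : w₁ ∉ L) :
    ¬∃ F : Set (Set (Q × A)),
      {w : ℕ → A | (∀ k, runP δ q0 w k ≠ none) ∧ infSetP δ q0 w ∈ F} = L := by
  rintro ⟨F, hF⟩
  rw [← hF] at hw₁L hw₂L
  exact hw₁L ⟨hw₁, hinf ▸ hw₂L.2⟩

theorem exists_even_mod_near {P : ℕ} (hP : 3 ≤ P) (k : ℕ) :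
    ∃ d ≤ 2, (k + d) % P % 2 = 0 ∧ (k + d) % P + 1 < P := by
  have hmod : ∀ d < P, (k + d) % P = if P ≤ k % P + d then k % P + d - P else k % P + d :=
    fun d hd => by rw [Nat.add_mod_eq_ite, Nat.mod_eq_of_lt hd]
  have hk := Nat.mod_lt k (show 0 < P by omega)
  by_cases h0 : k % P % 2 = 0 ∧ k % P + 1 < P
  · exact ⟨0, by omega, by simpa using h0⟩
  by_cases h1 : k % P + 1 = P ∨ k % P + 2 < P
  · refine ⟨1, by omega, ?_⟩
    rw [hmod 1 (by omega)]
    split_ifs <;> omega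
  · refine ⟨2, le_rfl, ?_⟩
    rw [hmod 2 (by omega)]
    split_ifs <;> omega

theorem mod_notMem_Lvee {g : ℕ → Bool} {P : ℕ} (hP : 3 ≤ P)
    (hg : ∀ r, r % 2 = 0 → r + 1 < P → g r ≠ g (r + 1)) :
    (fun m => g (m % P)) ∉ Lvee := by
  rintro ⟨c, hc⟩
  obtain ⟨k, h0, h1, h2, h3⟩ := hc.nonempty
  obtain ⟨d, hd, heven, hlt⟩ := exists_even_mod_near hP k
  have hsucc : (k + d + 1) % P = (k + d) % P + 1 := by
    rw [Nat.add_mod, Nat.mod_eq_of_lt (show 1 < P by omega), Nat.mod_eq_of_lt hlt]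
  apply hg _ heven hlt
  rw [← hsucc]
  interval_cases d <;> simp_all [Nat.add_assoc]

theorem prependConst_mod_mem_Lvee (c : Bool) (g : ℕ → Bool) (P : ℕ) :
    (fun m => prependConst 4 c g (m % (4 + P))) ∈ Lvee := by
  refine ⟨c, Set.infinite_of_injective_forall_mem (f := fun m => m * (4 + P)) ?_ fun m => ?_⟩
  · intro a b hab
    exact Nat.eq_of_mul_eq_mul_right (by omega) hab
  · have hmod : ∀ j < 4, (m * (4 + P) + j) % (4 + P) = j := fun j hj => by
      rw [Nat.mul_comm, Nat.mul_add_mod, Nat.mod_eq_of_lt (by omega)]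
    refine ⟨?_, ?_, ?_, ?_⟩ <;> simp [hmod, prependConst]

theorem IsClosedRun.exists_words {Q : Type*} {δ : Q → Bool → Option Q} {q0 : Q} {s : ℕ → Q}
    {g : ℕ → Bool} {P : ℕ} (h : IsClosedRun δ q0 s g P) (hP : 3 ≤ P)
    (hcover : ∀ p a, δ p a ≠ none → ∃ r < P, s r = p ∧ g r = a)
    (hg : ∀ r, r % 2 = 0 → r + 1 < P → g r ≠ g (r + 1)) {c : Bool} (hc : δ q0 c = some q0) :
    ∃ w1 w2 : ℕ → Bool,
      (∃ u v : List Bool, ∃ hv : v ≠ [], w1 = upWord u v hv) ∧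
      (∃ u v : List Bool, ∃ hv : v ≠ [], w2 = upWord u v hv) ∧
      (∀ k, runP δ q0 w1 k ≠ none) ∧ (∀ k, runP δ q0 w2 k ≠ none) ∧
      infSetP δ q0 w1 = {qc | δ qc.1 qc.2 ≠ none} ∧
      infSetP δ q0 w2 = {qc | δ qc.1 qc.2 ≠ none} ∧
      w2 ∈ Lvee ∧ w1 ∉ Lvee := by
  have h' := h.prepend hc 4
  have hcover' : ∀ p a, δ p a ≠ none →
      ∃ r < 4 + P, prependConst 4 q0 s r = p ∧ prependConst 4 c g r = a := fun p a hpa => by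
    obtain ⟨r, hr, rfl, rfl⟩ := hcover p a hpa
    exact ⟨r + 4, by omega, by simp [prependConst], by simp [prependConst]⟩
  exact ⟨_, _, exists_upWord_eq_mod g (by omega), exists_upWord_eq_mod _ (by omega),
    h.runP_ne_none, h'.runP_ne_none, h.infSetP_eq hcover, h'.infSetP_eq hcover',
    prependConst_mod_mem_Lvee c g P, mod_notMem_Lvee hP hg⟩

section ClosedChain

variable {n P : ℕ} {δ : Fin (n + 1) → Bool → Option (Fin (n + 1))} {σ : ℕ → Bool}

/-- State `qᵢ` is `Fin.clamp i n`. `P` is the length of the cycle through `q₀` spelled by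
`chainLetter σ` on `[0, P)`; in the first alternative `σ n` labels the self-loop at `qₙ`. -/
def IsClosedChain (δ : Fin (n + 1) → Bool → Option (Fin (n + 1))) (σ : ℕ → Bool) (P : ℕ) :
    Prop :=
  (∀ i < n, δ (Fin.clamp i n) (σ i) = some (Fin.clamp i n) ∧
    δ (Fin.clamp i n) (!σ i) = some (Fin.clamp (i + 1) n)) ∧
  (P = 2 * n + 2 ∧ δ (Fin.last n) (σ n) = some (Fin.last n) ∧ δ (Fin.last n) (!σ n) = some 0 ∨
    P = 2 * n + 1 ∧ δ (Fin.last n) (σ n) = some 0 ∧ δ (Fin.last n) (!σ n) = none)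

def chainLetter (σ : ℕ → Bool) (r : ℕ) : Bool :=
  if r % 2 = 0 then σ (r / 2) else !σ (r / 2)

theorem chainLetter_ne_succ (σ : ℕ → Bool) {r : ℕ} (hr : r % 2 = 0) :
    chainLetter σ r ≠ chainLetter σ (r + 1) := by
  simp [chainLetter, hr, show (r + 1) % 2 = 1 by omega, show (r + 1) / 2 = r / 2 by omega]

@[simp]
theorem Fin.clamp_zero (n : ℕ) : Fin.clamp 0 n = 0 := rfl

theorem IsClosedChain.three_le (h : IsClosedChain δ σ P) (hn : 1 ≤ n) : 3 ≤ P := by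
  rcases h.2 with ⟨rfl, -⟩ | ⟨rfl, -⟩ <;> omega

theorem IsClosedChain.isClosedRun (h : IsClosedChain δ σ P) :
    IsClosedRun δ 0 (fun r => Fin.clamp (r / 2) n) (chainLetter σ) P := by
  obtain ⟨hpair, hlast⟩ := h
  have hP : 2 * n < P := by rcases hlast with ⟨rfl, -⟩ | ⟨rfl, -⟩ <;> omega
  refine ⟨by omega, Fin.clamp_zero n, fun r hr => ?_⟩
  dsimp only
  by_cases hrn : r < 2 * n
  · rw [Nat.mod_eq_of_lt (by omega)]
    by_cases heven : r % 2 = 0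
    · simpa [chainLetter, heven, show (r + 1) / 2 = r / 2 by omega] using
        (hpair (r / 2) (by omega)).1
    · simpa [chainLetter, heven, show (r + 1) / 2 = r / 2 + 1 by omega] using
        (hpair (r / 2) (by omega)).2
  · rw [Fin.clamp_eq_last _ _ (by omega)]
    rcases hlast with ⟨rfl, hloop, hback⟩ | ⟨rfl, hback, -⟩
    · obtain rfl | rfl : r = 2 * n ∨ r = 2 * n + 1 := by omega
      · rw [Nat.mod_eq_of_lt (by omega), Fin.clamp_eq_last _ _ (by omega)]
        simpa [chainLetter] using hloop
      · simpa [chainLetter, show (2 * n + 1) / 2 = n by omega] using hback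
    · obtain rfl : r = 2 * n := by omega
      simpa [chainLetter] using hback

theorem IsClosedChain.cover (h : IsClosedChain δ σ P) (p : Fin (n + 1)) (a : Bool)
    (hpa : δ p a ≠ none) : ∃ r < P, Fin.clamp (r / 2) n = p ∧ chainLetter σ r = a := by
  obtain ⟨hpair, hlast⟩ := h
  have hP : 2 * n < P := by rcases hlast with ⟨rfl, -⟩ | ⟨rfl, -⟩ <;> omega
  by_cases hp : p.val < n
  · have hclamp : ∀ r, r / 2 = p.val → Fin.clamp (r / 2) n = p := fun r hr =>
      Fin.ext (by simp [hr, hp.le])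
    rcases Bool.eq_or_eq_not a (σ p) with rfl | rfl
    · exact ⟨2 * p, by omega, hclamp _ (by omega), by simp [chainLetter]⟩
    · exact ⟨2 * p + 1, by omega, hclamp _ (by omega), by
        simp [chainLetter, show (2 * p.val + 1) / 2 = p.val by omega]⟩
  · obtain rfl : p = Fin.last n := Fin.ext (by simp; omega)
    rcases Bool.eq_or_eq_not a (σ n) with rfl | rfl
    · exact ⟨2 * n, hP, Fin.clamp_eq_last _ _ (by omega), by simp [chainLetter]⟩
    · rcases hlast with ⟨rfl, -, -⟩ | ⟨rfl, -, hnone⟩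
      · exact ⟨2 * n + 1, by omega, Fin.clamp_eq_last _ _ (by omega), by
          simp [chainLetter, show (2 * n + 1) / 2 = n by omega]⟩
      · exact absurd hnone hpa

end ClosedChain

theorem exists_isClosedChain {n : ℕ} {δ : Fin (n + 1) → Bool → Option (Fin (n + 1))}
    (hchain : ∀ i : Fin (n + 1), ∀ h : i.val < n, ∃ σ : Bool,
      δ i σ = some i ∧ δ i (!σ) = some ⟨i.val + 1, Nat.succ_lt_succ h⟩)
    (hback : ∃ τ : Bool, δ (Fin.last n) τ = some 0 ∧
      (δ (Fin.last n) (!τ) = some (Fin.last n) ∨ δ (Fin.last n) (!τ) = none)) :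
    ∃ σ P, IsClosedChain δ σ P := by
  have hpair : ∀ i, ∃ c : Bool, i < n → δ (Fin.clamp i n) c = some (Fin.clamp i n) ∧
      δ (Fin.clamp i n) (!c) = some (Fin.clamp (i + 1) n) := fun i => by
    by_cases hi : i < n
    · obtain ⟨c, hc⟩ := hchain (Fin.clamp i n) (by simpa using hi)
      have hclamp : Fin.clamp i n = ⟨i, by omega⟩ := Fin.ext (by simp; omega)
      have hclamp' : Fin.clamp (i + 1) n = ⟨i + 1, by omega⟩ := Fin.ext (by simp; omega)
      exact ⟨c, fun _ => by simpa only [hclamp, hclamp'] using hc⟩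
    · exact ⟨true, fun h => absurd h hi⟩
  choose σ hσ using hpair
  have hpair' (c : Bool) : ∀ i < n, δ (Fin.clamp i n) (Function.update σ n c i) =
      some (Fin.clamp i n) ∧ δ (Fin.clamp i n) (!Function.update σ n c i) =
      some (Fin.clamp (i + 1) n) := fun i hi => by
    simpa [Function.update_of_ne hi.ne] using hσ i hi
  obtain ⟨τ, hτ, hloop | hnone⟩ := hback
  · exact ⟨_, 2 * n + 2, hpair' (!τ), Or.inl ⟨rfl, by simpa using hloop, by simpa using hτ⟩⟩
  · exact ⟨_, 2 * n + 1, hpair' τ, Or.inr ⟨rfl, by simpa using hτ, by simpa using hnone⟩⟩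

theorem closed_chain_cannot_recognize_Lvee (n : ℕ) (hn : 1 ≤ n)
    (δ : Fin (n + 1) → Bool → Option (Fin (n + 1)))
    (hchain : ∀ i : Fin (n + 1), ∀ h : i.val < n, ∃ σ : Bool,
      δ i σ = some i ∧ δ i (!σ) = some ⟨i.val + 1, Nat.succ_lt_succ h⟩)
    (hback : ∃ τ : Bool, δ (Fin.last n) τ = some 0 ∧
      (δ (Fin.last n) (!τ) = some (Fin.last n) ∨ δ (Fin.last n) (!τ) = none)) :
    (∃ w1 w2 : ℕ → Bool,
      (∃ u v : List Bool, ∃ hv : v ≠ [], w1 = upWord u v hv) ∧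
      (∃ u v : List Bool, ∃ hv : v ≠ [], w2 = upWord u v hv) ∧
      (∀ k, runP δ 0 w1 k ≠ none) ∧ (∀ k, runP δ 0 w2 k ≠ none) ∧
      infSetP δ 0 w1 = {qc | δ qc.1 qc.2 ≠ none} ∧
      infSetP δ 0 w2 = {qc | δ qc.1 qc.2 ≠ none} ∧
      w2 ∈ Lvee ∧ w1 ∉ Lvee) ∧
    ¬∃ F : Set (Set (Fin (n + 1) × Bool)),
      {w : ℕ → Bool | (∀ k, runP δ 0 w k ≠ none) ∧ infSetP δ 0 w ∈ F} =
        Lvee := by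
  obtain ⟨σ, P, hC⟩ := exists_isClosedChain hchain hback
  have hloop : δ 0 (σ 0) = some 0 := (hC.1 0 hn).1
  have hwords := hC.isClosedRun.exists_words (hC.three_le hn) hC.cover
    (fun r hr _ => chainLetter_ne_succ σ hr) hloop
  refine ⟨hwords, ?_⟩
  obtain ⟨w1, w2, -, -, hw1, -, hinf1, hinf2, hw2L, hw1L⟩ := hwords
  exact not_exists_muller_eq_of_infSetP_eq hw1 (hinf1.trans hinf2.symm) hw2L hw1L
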